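/- For all parameters A, B, C ∈ ℂ with (C;q)_n ≠ 0 for all n, all r, s ∈ ℕ, and all x, y ∈ ℂ with 0 < |x| < 1 and 0 < |y| < 1, applying first the s-fold iterated Jackson q-derivative in y and then the r-fold iterated Jackson q₁-derivative in x to Φ₁(A,B;C;q,q₁;x,y) yields [(A;q)_{r+s} (B;q₁)_r / ((1−q₁)^r (1−q)^s (C;q)_{r+s})] · Φ₁(q^{r+s} A, q₁^r B; q^{r+s} C; q,q₁; x, y). (Equation (2.16).) -/

import Mathlib

/-
Φ₁ is a double power series whose coefficients are bounded: the q-shifted factorials converge to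
infinite products, which are nonzero when no factor vanishes. Hence it may be Jackson-differentiated
term by term. Since D_q y^k = (1 - q^k)/(1 - q) · y^(k-1), one Jackson derivative in y turns Φ₁
into (1 - A)/((1 - q)(1 - C)) · Φ₁(qA, B; qC), and one in x with base q₁ gives the factor
(1 - A)(1 - B)/((1 - q₁)(1 - C)) and the parameters (qA, q₁B; qC). Iterating, these constants
multiply up to the q-shifted factorials of the formula.
-/

open Complex

/-- The q-shifted factorial (z;q)_n = prod_{r=0}^{n-1} (1 - z q^r). -/
noncomputable def qPoch (q z : ℂ) (n : ℕ) : ℂ :=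
  ∏ r ∈ Finset.range n, (1 - z * q ^ r)

/-- The bibasic Humbert hypergeometric function Φ₁ on two independent bases q and q₁. -/
noncomputable def Phi1 (q q1 A B C x y : ℂ) : ℂ :=
  ∑' p : ℕ × ℕ,
    qPoch q A (p.1 + p.2) * qPoch q1 B p.1 /
      (qPoch q C (p.1 + p.2) * qPoch q1 q1 p.1 * qPoch q q p.2) * x ^ p.1 * y ^ p.2

/-- The Jackson p-derivative. -/
noncomputable def jackson (p : ℂ) (f : ℂ → ℂ) (x : ℂ) : ℂ :=
  (f x - f (p * x)) / ((1 - p) * x)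

open Finset Filter Topology

section QPochhammer

variable {q : ℂ}

lemma qPoch_succ' (q z : ℂ) (n : ℕ) : qPoch q z (n + 1) = (1 - z) * qPoch q (q * z) n := by
  simp only [qPoch, prod_range_succ', pow_succ, pow_zero, mul_one]
  rw [mul_comm]
  congr 1
  exact prod_congr rfl fun i _ => by ring

lemma qPoch_add (q z : ℂ) (m n : ℕ) : qPoch q z (m + n) = qPoch q z m * qPoch q (q ^ m * z) n := by
  simp only [qPoch, prod_range_add, pow_add]
  congr 1
  exact prod_congr rfl fun i _ => by ring

lemma qPoch_self_succ (q : ℂ) (n : ℕ) : qPoch q q (n + 1) = qPoch q q n * (1 - q ^ (n + 1)) := by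
  rw [qPoch, prod_range_succ, ← pow_succ']
  rfl

lemma qPoch_pow_mul_ne_zero {z : ℂ} (hz : ∀ n, qPoch q z n ≠ 0) (m n : ℕ) :
    qPoch q (q ^ m * z) n ≠ 0 :=
  right_ne_zero_of_mul (qPoch_add q z m n ▸ hz (m + n))

lemma one_sub_pow_succ_ne_zero (hq : ‖q‖ < 1) (n : ℕ) : 1 - q ^ (n + 1) ≠ 0 := by
  refine sub_ne_zero.mpr fun h => ?_
  have : ‖q ^ (n + 1)‖ < 1 := by
    rw [norm_pow]
    exact pow_lt_one₀ (norm_nonneg q) hq n.succ_ne_zero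
  rw [← h, norm_one] at this
  exact this.false

lemma qPoch_self_ne_zero (hq : ‖q‖ < 1) (n : ℕ) : qPoch q q n ≠ 0 :=
  prod_ne_zero_iff.mpr fun r _ => pow_succ' q r ▸ one_sub_pow_succ_ne_zero hq r

lemma summable_norm_neg_mul_pow (hq : ‖q‖ < 1) (z : ℂ) :
    Summable fun r : ℕ => ‖-(z * q ^ r)‖ := by
  simpa [norm_mul, norm_pow] using (summable_geometric_of_lt_one (norm_nonneg q) hq).mul_left ‖z‖

lemma tendsto_qPoch (hq : ‖q‖ < 1) (z : ℂ) :
    Tendsto (qPoch q z) atTop (𝓝 (∏' r, (1 - z * q ^ r))) := by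
  have h := (multipliable_one_add_of_summable (summable_norm_neg_mul_pow hq z)).hasProd
  simp only [← sub_eq_add_neg] at h
  exact h.tendsto_prod_nat

lemma tprod_qPoch_ne_zero (hq : ‖q‖ < 1) {z : ℂ} (hz : ∀ n, qPoch q z n ≠ 0) :
    ∏' r, (1 - z * q ^ r) ≠ 0 := by
  have h := tprod_one_add_ne_zero_of_summable (fun r => ?_) (summable_norm_neg_mul_pow hq z)
  · simpa only [← sub_eq_add_neg] using h
  · rw [← sub_eq_add_neg]
    exact prod_ne_zero_iff.mp (hz (r + 1)) r (self_mem_range_succ r)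

lemma exists_norm_qPoch_le (hq : ‖q‖ < 1) (z : ℂ) : ∃ M, ∀ n, ‖qPoch q z n‖ ≤ M := by
  obtain ⟨M, hM⟩ := isBounded_iff_forall_norm_le.mp
    (Metric.isBounded_range_of_tendsto _ (tendsto_qPoch hq z))
  exact ⟨M, fun n => hM _ ⟨n, rfl⟩⟩

lemma exists_norm_inv_qPoch_le (hq : ‖q‖ < 1) {z : ℂ} (hz : ∀ n, qPoch q z n ≠ 0) :
    ∃ M, ∀ n, ‖(qPoch q z n)⁻¹‖ ≤ M := by
  obtain ⟨M, hM⟩ := isBounded_iff_forall_norm_le.mp (Metric.isBounded_range_of_tendsto _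
    ((tendsto_qPoch hq z).inv₀ (tprod_qPoch_ne_zero hq hz)))
  exact ⟨M, fun n => hM _ ⟨n, rfl⟩⟩

end QPochhammer

noncomputable def phi1Coeff (q q1 A B C : ℂ) (n : ℕ × ℕ) : ℂ :=
  qPoch q A (n.1 + n.2) * qPoch q1 B n.1 /
    (qPoch q C (n.1 + n.2) * qPoch q1 q1 n.1 * qPoch q q n.2)

lemma Phi1_eq_tsum (q q1 A B C x y : ℂ) :
    Phi1 q q1 A B C x y = ∑' n, phi1Coeff q q1 A B C n * x ^ n.1 * y ^ n.2 :=
  rfl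

lemma exists_norm_phi1Coeff_le {q q1 : ℂ} (hq : ‖q‖ < 1) (hq1 : ‖q1‖ < 1) (A B : ℂ) {C : ℂ}
    (hC : ∀ n, qPoch q C n ≠ 0) : ∃ M, ∀ n, ‖phi1Coeff q q1 A B C n‖ ≤ M := by
  obtain ⟨MA, hA⟩ := exists_norm_qPoch_le hq A
  obtain ⟨MB, hB⟩ := exists_norm_qPoch_le hq1 B
  obtain ⟨MC, hC⟩ := exists_norm_inv_qPoch_le hq hC
  obtain ⟨M1, h1⟩ := exists_norm_inv_qPoch_le hq1 (qPoch_self_ne_zero hq1)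
  obtain ⟨M, h⟩ := exists_norm_inv_qPoch_le hq (qPoch_self_ne_zero hq)
  refine ⟨MA * MB * (MC * M1 * M), fun n => ?_⟩
  have hMA : 0 ≤ MA := (norm_nonneg _).trans (hA 0)
  have hMB : 0 ≤ MB := (norm_nonneg _).trans (hB 0)
  have hMC : 0 ≤ MC := (norm_nonneg _).trans (hC 0)
  have hM1 : 0 ≤ M1 := (norm_nonneg _).trans (h1 0)
  rw [phi1Coeff, div_eq_mul_inv, mul_inv, mul_inv, norm_mul, norm_mul, norm_mul, norm_mul]
  gcongr
  exacts [hA _, hB _, hC _, h1 _, h _]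

lemma summable_mul_pow_mul_pow {c : ℕ × ℕ → ℂ} {M : ℝ} (hc : ∀ n, ‖c n‖ ≤ M) {x y : ℂ}
    (hx : ‖x‖ < 1) (hy : ‖y‖ < 1) : Summable fun n : ℕ × ℕ => c n * x ^ n.1 * y ^ n.2 := by
  have hgeom : Summable fun n : ℕ × ℕ => ‖x‖ ^ n.1 * ‖y‖ ^ n.2 :=
    (summable_geometric_of_lt_one (norm_nonneg x) hx).mul_of_nonneg
      (summable_geometric_of_lt_one (norm_nonneg y) hy) (fun _ => by positivity)
      (fun _ => by positivity)
  refine Summable.of_norm_bounded (hgeom.mul_left M) fun n => ?_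
  rw [norm_mul, norm_mul, norm_pow, norm_pow, mul_assoc]
  gcongr
  exact hc n

lemma summable_phi1Coeff_mul {q q1 C x y : ℂ} (hq : ‖q‖ < 1) (hq1 : ‖q1‖ < 1) (A B : ℂ)
    (hC : ∀ n, qPoch q C n ≠ 0) (hx : ‖x‖ < 1) (hy : ‖y‖ < 1) :
    Summable fun n => phi1Coeff q q1 A B C n * x ^ n.1 * y ^ n.2 :=
  have ⟨_, hM⟩ := exists_norm_phi1Coeff_le hq hq1 A B hC
  summable_mul_pow_mul_pow hM hx hy

lemma jackson_tsum_mul_pow_snd {p y : ℂ} (hy : y ≠ 0) {a : ℕ × ℕ → ℂ}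
    (h : Summable fun n => a n * y ^ n.2) (hp : Summable fun n => a n * (p * y) ^ n.2) :
    jackson p (fun u => ∑' n, a n * u ^ n.2) y =
      ∑' n : ℕ × ℕ, a (n.1, n.2 + 1) * ((1 - p ^ (n.2 + 1)) / (1 - p)) * y ^ n.2 := by
  have hinj : Function.Injective fun n : ℕ × ℕ => (n.1, n.2 + 1) := by
    rintro ⟨_, _⟩ ⟨_, _⟩ h
    simpa using h
  rw [jackson, ← h.tsum_sub hp, ← tsum_div_const, ← hinj.tsum_eq]
  · refine tsum_congr fun n => ?_
    rw [mul_pow, pow_succ, pow_succ]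
    field_simp
  · rintro ⟨l, _ | k⟩ hn
    · simp at hn
    · exact ⟨(l, k), rfl⟩

lemma jackson_tsum_mul_pow_fst {p x : ℂ} (hx : x ≠ 0) {a : ℕ × ℕ → ℂ}
    (h : Summable fun n => a n * x ^ n.1) (hp : Summable fun n => a n * (p * x) ^ n.1) :
    jackson p (fun u => ∑' n, a n * u ^ n.1) x =
      ∑' n : ℕ × ℕ, a (n.1 + 1, n.2) * ((1 - p ^ (n.1 + 1)) / (1 - p)) * x ^ n.1 := by
  have key := jackson_tsum_mul_pow_snd hx (a := fun n => a n.swap)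
    (h.comp_injective Prod.swap_injective) (hp.comp_injective Prod.swap_injective)
  have hs : ∀ u : ℂ, ∑' n, a n * u ^ n.1 = ∑' n : ℕ × ℕ, a n.swap * u ^ n.2 := fun u =>
    ((Equiv.prodComm ℕ ℕ).tsum_eq fun n => a n * u ^ n.1).symm
  simp only [hs]
  rw [key, ← (Equiv.prodComm ℕ ℕ).tsum_eq]
  rfl

lemma phi1Coeff_succ_snd {q : ℂ} (hq : ‖q‖ < 1) (q1 A B C : ℂ) (l k : ℕ) :
    phi1Coeff q q1 A B C (l, k + 1) * (1 - q ^ (k + 1)) =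
      (1 - A) / (1 - C) * phi1Coeff q q1 (q * A) B (q * C) (l, k) := by
  have := one_sub_pow_succ_ne_zero hq k
  simp only [phi1Coeff, ← add_assoc]
  rw [qPoch_self_succ, qPoch_succ', qPoch_succ']
  field_simp

lemma phi1Coeff_succ_fst (q : ℂ) {q1 : ℂ} (hq1 : ‖q1‖ < 1) (A B C : ℂ) (l k : ℕ) :
    phi1Coeff q q1 A B C (l + 1, k) * (1 - q1 ^ (l + 1)) =
      (1 - A) * (1 - B) / (1 - C) * phi1Coeff q q1 (q * A) (q1 * B) (q * C) (l, k) := by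
  have := one_sub_pow_succ_ne_zero hq1 l
  simp only [phi1Coeff, add_right_comm l 1 k]
  rw [qPoch_self_succ, qPoch_succ', qPoch_succ', qPoch_succ']
  field_simp

lemma jackson_Phi1_snd {q q1 C x y : ℂ} (hq : ‖q‖ < 1) (hq1 : ‖q1‖ < 1) (A B : ℂ)
    (hC : ∀ n, qPoch q C n ≠ 0) (hx : ‖x‖ < 1) (hy0 : y ≠ 0) (hy : ‖y‖ < 1) :
    jackson q (fun u => Phi1 q q1 A B C x u) y =
      (1 - A) / ((1 - q) * (1 - C)) * Phi1 q q1 (q * A) B (q * C) x y := by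
  have hqy : ‖q * y‖ < 1 := by
    rw [norm_mul]
    exact mul_lt_one_of_nonneg_of_lt_one_left (norm_nonneg q) hq hy.le
  refine (jackson_tsum_mul_pow_snd hy0 (a := fun n => phi1Coeff q q1 A B C n * x ^ n.1)
    (summable_phi1Coeff_mul hq hq1 A B hC hx hy)
    (summable_phi1Coeff_mul hq hq1 A B hC hx hqy)).trans ?_
  rw [Phi1_eq_tsum, ← tsum_mul_left]
  refine tsum_congr fun ⟨l, k⟩ => ?_
  rw [div_mul_eq_div_div_swap]
  linear_combination x ^ l * y ^ k / (1 - q) * phi1Coeff_succ_snd hq q1 A B C l k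

lemma jackson_Phi1_fst {q q1 C x y : ℂ} (hq : ‖q‖ < 1) (hq1 : ‖q1‖ < 1) (A B : ℂ)
    (hC : ∀ n, qPoch q C n ≠ 0) (hx0 : x ≠ 0) (hx : ‖x‖ < 1) (hy : ‖y‖ < 1) :
    jackson q1 (fun t => Phi1 q q1 A B C t y) x =
      (1 - A) * (1 - B) / ((1 - q1) * (1 - C)) * Phi1 q q1 (q * A) (q1 * B) (q * C) x y := by
  have hq1x : ‖q1 * x‖ < 1 := by
    rw [norm_mul]
    exact mul_lt_one_of_nonneg_of_lt_one_left (norm_nonneg q1) hq1 hx.le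
  have hPhi1 : ∀ t, Phi1 q q1 A B C t y = ∑' n, phi1Coeff q q1 A B C n * y ^ n.2 * t ^ n.1 :=
    fun t => tsum_congr fun n => mul_right_comm _ _ _
  simp only [hPhi1]
  refine (jackson_tsum_mul_pow_fst hx0
    ((summable_phi1Coeff_mul hq hq1 A B hC hx hy).congr fun n => mul_right_comm _ _ _)
    ((summable_phi1Coeff_mul hq hq1 A B hC hq1x hy).congr fun n => mul_right_comm _ _ _)).trans ?_
  rw [Phi1_eq_tsum, ← tsum_mul_left]
  refine tsum_congr fun ⟨l, k⟩ => ?_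
  rw [div_mul_eq_div_div_swap]
  linear_combination x ^ l * y ^ k / (1 - q1) * phi1Coeff_succ_fst q hq1 A B C l k

lemma iterate_jackson_eq_prod_mul {p c : ℂ} {U : Set ℂ} (hU : ∀ t ∈ U, p * t ∈ U)
    {f : ℂ → ℂ} {F : ℕ → ℂ → ℂ} {K : ℕ → ℂ} (hf : ∀ t ∈ U, f t = c * F 0 t)
    (hF : ∀ n, ∀ t ∈ U, jackson p (F n) t = K n * F (n + 1) t) (n : ℕ) :
    ∀ t ∈ U, (jackson p)^[n] f t = c * (∏ i ∈ range n, K i) * F n t := by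
  induction n with
  | zero => simpa using hf
  | succ n ih =>
    intro t ht
    have hstep := hF n t ht
    rw [Function.iterate_succ_apply', jackson, ih t ht, ih (p * t) (hU t ht), prod_range_succ]
    rw [jackson] at hstep
    linear_combination c * (∏ i ∈ range n, K i) * hstep

lemma mul_mem_punctured_unit_disc {p t : ℂ} (hp0 : p ≠ 0) (hp : ‖p‖ < 1)
    (ht : t ∈ {t : ℂ | t ≠ 0 ∧ ‖t‖ < 1}) : p * t ∈ {t : ℂ | t ≠ 0 ∧ ‖t‖ < 1} :=
  ⟨mul_ne_zero hp0 ht.1, by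
    rw [norm_mul]
    exact mul_lt_one_of_nonneg_of_lt_one_left (norm_nonneg p) hp ht.2.le⟩

lemma iterate_jackson_Phi1_snd {q q1 C x y : ℂ} (hq0 : q ≠ 0) (hq : ‖q‖ < 1) (hq1 : ‖q1‖ < 1)
    (A B : ℂ) (hC : ∀ n, qPoch q C n ≠ 0) (hx : ‖x‖ < 1) (s : ℕ) (hy0 : y ≠ 0) (hy : ‖y‖ < 1) :
    (jackson q)^[s] (fun u => Phi1 q q1 A B C x u) y =
      qPoch q A s / ((1 - q) ^ s * qPoch q C s) * Phi1 q q1 (q ^ s * A) B (q ^ s * C) x y := by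
  have key := iterate_jackson_eq_prod_mul (fun t => mul_mem_punctured_unit_disc hq0 hq) (c := 1)
    (f := fun u => Phi1 q q1 A B C x u)
    (F := fun n u => Phi1 q q1 (q ^ n * A) B (q ^ n * C) x u)
    (K := fun n => (1 - q ^ n * A) / ((1 - q) * (1 - q ^ n * C)))
    (fun t _ => by simp)
    (fun n t ht => by
      rw [jackson_Phi1_snd hq hq1 _ B (qPoch_pow_mul_ne_zero hC n) hx ht.1 ht.2, ← mul_assoc,
        ← mul_assoc, ← pow_succ'])
    s y ⟨hy0, hy⟩
  rw [key, one_mul, prod_div_distrib, prod_mul_distrib, prod_const, card_range]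
  simp only [qPoch, mul_comm A, mul_comm C]

lemma iterate_jackson_Phi1_fst {q q1 C x y c : ℂ} (hq : ‖q‖ < 1) (hq10 : q1 ≠ 0) (hq1 : ‖q1‖ < 1)
    (A B : ℂ) (hC : ∀ n, qPoch q C n ≠ 0) (hy : ‖y‖ < 1) {f : ℂ → ℂ}
    (hf : ∀ t, t ≠ 0 → ‖t‖ < 1 → f t = c * Phi1 q q1 A B C t y) (r : ℕ) (hx0 : x ≠ 0)
    (hx : ‖x‖ < 1) :
    (jackson q1)^[r] f x = c * (qPoch q A r * qPoch q1 B r / ((1 - q1) ^ r * qPoch q C r)) *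
      Phi1 q q1 (q ^ r * A) (q1 ^ r * B) (q ^ r * C) x y := by
  have key := iterate_jackson_eq_prod_mul (fun t => mul_mem_punctured_unit_disc hq10 hq1)
    (F := fun n t => Phi1 q q1 (q ^ n * A) (q1 ^ n * B) (q ^ n * C) t y)
    (K := fun n => (1 - q ^ n * A) * (1 - q1 ^ n * B) / ((1 - q1) * (1 - q ^ n * C)))
    (fun t ht => by simpa using hf t ht.1 ht.2)
    (fun n t ht => by
      rw [jackson_Phi1_fst hq hq1 _ _ (qPoch_pow_mul_ne_zero hC n) ht.1 ht.2 hy, ← mul_assoc,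
        ← mul_assoc, ← mul_assoc, ← pow_succ', ← pow_succ'])
    r x ⟨hx0, hx⟩
  rw [key, prod_div_distrib, prod_mul_distrib, prod_mul_distrib, prod_const, card_range]
  simp only [qPoch, mul_comm A, mul_comm B, mul_comm C]

theorem stmt14 (q q1 A B C x y : ℂ)
    (hq0 : 0 < ‖q‖) (hq1 : ‖q‖ < 1)
    (hq10 : 0 < ‖q1‖) (hq11 : ‖q1‖ < 1)
    (hC : ∀ n : ℕ, qPoch q C n ≠ 0)
    (r s : ℕ) (hx0 : 0 < ‖x‖) (hx : ‖x‖ < 1) (hy0 : 0 < ‖y‖) (hy : ‖y‖ < 1) :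
    ((jackson q1)^[r]
        (fun t => ((jackson q)^[s] (fun u => Phi1 q q1 A B C t u)) y)) x =
      qPoch q A (r + s) * qPoch q1 B r /
          ((1 - q1) ^ r * (1 - q) ^ s * qPoch q C (r + s)) *
        Phi1 q q1 (q ^ (r + s) * A) (q1 ^ r * B) (q ^ (r + s) * C) x y := by
  rw [iterate_jackson_Phi1_fst hq1 (norm_pos_iff.mp hq10) hq11 _ B (qPoch_pow_mul_ne_zero hC s) hy
    (fun t _ ht => iterate_jackson_Phi1_snd (norm_pos_iff.mp hq0) hq1 hq11 A B hC ht s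
      (norm_pos_iff.mp hy0) hy) r (norm_pos_iff.mp hx0) hx]
  rw [← mul_assoc, ← mul_assoc, ← pow_add, add_comm r s, qPoch_add q A, qPoch_add q C]
  ring
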